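/- Let T be a triangulated category with infinite coproducts and let G be a set of compact objects of T. If the only localising (i.e. full triangulated, closed under coproducts) subcategory of T containing G is T itself, then the objects of G detect isomorphisms: a morphism f : X → Y in T is an isomorphism if and only if for every G in the set and every integer n, the induced map [G, X]ₙ → [G, Y]ₙ is an isomorphism. -/

import Mathlib

open CategoryTheory CategoryTheory.Limits CategoryTheory.Pretriangulated

universe v u

variable {C : Type u} [Category.{v} C] [Preadditive C] [HasZeroObject C]
  [HasShift C ℤ] [∀ n : ℤ, (shiftFunctor C n).Additive] [Pretriangulated C]
  [HasCoproducts.{v} C]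

/-- The canonical map `⨁ᵢ [A, fᵢ] → [A, ∐ f]`. -/
noncomputable def coproductComparison (A : C) {ι : Type v} [DecidableEq ι] (f : ι → C) :
    DirectSum ι (fun i => A ⟶ f i) →+ (A ⟶ ∐ f) :=
  DirectSum.toAddMonoid (fun i =>
    AddMonoidHom.mk' (fun g => g ≫ Sigma.ι f i)
      (fun g h => Preadditive.add_comp _ _ _ _ _ _))

/-- An object `A` is compact if `[A, −]` commutes with arbitrary coproducts. -/
def IsCompactObj (A : C) : Prop :=
  ∀ {ι : Type v} [DecidableEq ι] (f : ι → C), Function.Bijective (coproductComparison A f)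

/-- A localising subcategory of `T`: a full triangulated subcategory (closed under
isomorphisms, shifts and triangles) which is closed under coproducts. -/
structure IsLocalising (S : Set C) : Prop where
  mem_of_iso : ∀ {X Y : C}, (X ≅ Y) → X ∈ S → Y ∈ S
  shift_mem : ∀ {X : C} (n : ℤ), X ∈ S → X⟦n⟧ ∈ S
  ext_mem : ∀ T : Triangle C, (T ∈ distTriang C) → T.obj₁ ∈ S → T.obj₂ ∈ S → T.obj₃ ∈ S
  coprod_mem : ∀ {ι : Type v} (f : ι → C), (∀ i, f i ∈ S) → (∐ f) ∈ S

/-! Complete `f` to a distinguished triangle `X ⟶ Y ⟶ Z ⟶ X⟦1⟧`. The objects `A` with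
`[A, Z]ₙ = 0` for all `n` form a localising subcategory, and when `f` induces isomorphisms on
all `[G, −]ₙ` the long exact sequence of the triangle puts every `G ∈ 𝒢` into it. So it
contains `Z` itself, whence `Z = 0` and `f` is an isomorphism. -/

def shiftLeftOrthogonal (Z : C) : Set C :=
  {A | ∀ (n : ℤ) (g : A⟦n⟧ ⟶ Z), g = 0}

namespace shiftLeftOrthogonal

variable {Z : C}

section

omit [HasZeroObject C] [∀ n : ℤ, (shiftFunctor C n).Additive] [Pretriangulated C]
  [HasCoproducts.{v} C]

lemma hom_eq_zero {A : C} (hA : A ∈ shiftLeftOrthogonal Z) (g : A ⟶ Z) : g = 0 :=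
  (Preadditive.IsIso.comp_left_eq_zero ((shiftFunctorZero C ℤ).hom.app A) g).1 (hA 0 _)

lemma shift_mem {A : C} (m : ℤ) (hA : A ∈ shiftLeftOrthogonal Z) :
    A⟦m⟧ ∈ shiftLeftOrthogonal Z := fun n g =>
  (Preadditive.IsIso.comp_left_eq_zero ((shiftFunctorAdd C m n).hom.app A) g).1 (hA (m + n) _)

lemma mem_of_iso {A B : C} (e : A ≅ B) (hA : A ∈ shiftLeftOrthogonal Z) :
    B ∈ shiftLeftOrthogonal Z := fun n g =>
  (Preadditive.IsIso.comp_left_eq_zero (e.hom⟦n⟧') g).1 (hA n _)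

lemma isZero_of_mem_self (hZ : Z ∈ shiftLeftOrthogonal Z) : IsZero Z :=
  (IsZero.iff_id_eq_zero Z).2 (hom_eq_zero hZ _)

end

omit [HasCoproducts.{v} C] in
lemma ext_mem (T : Triangle C) (hT : T ∈ distTriang C) (h₁ : T.obj₁ ∈ shiftLeftOrthogonal Z)
    (h₂ : T.obj₂ ∈ shiftLeftOrthogonal Z) : T.obj₃ ∈ shiftLeftOrthogonal Z := by
  intro n g
  obtain ⟨h, rfl⟩ := Triangle.yoneda_exact₃ _ (Triangle.shift_distinguished T hT n) g
    (hom_eq_zero (shift_mem n h₂) _)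
  obtain rfl := hom_eq_zero (shift_mem 1 (shift_mem n h₁)) h
  exact comp_zero

omit [HasZeroObject C] [∀ n : ℤ, (shiftFunctor C n).Additive] [Pretriangulated C] in
lemma coprod_mem {ι : Type v} (F : ι → C) (hF : ∀ i, F i ∈ shiftLeftOrthogonal Z) :
    ∐ F ∈ shiftLeftOrthogonal Z := by
  intro n g
  refine (isColimitOfPreserves (shiftFunctor C n) (colimit.isColimit _)).hom_ext fun j => ?_
  simpa using hF j.as n ((Sigma.ι F j.as)⟦n⟧' ≫ g)

end shiftLeftOrthogonal

lemma isLocalising_shiftLeftOrthogonal (Z : C) : IsLocalising (shiftLeftOrthogonal Z) :=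
  ⟨shiftLeftOrthogonal.mem_of_iso, shiftLeftOrthogonal.shift_mem,
    shiftLeftOrthogonal.ext_mem, shiftLeftOrthogonal.coprod_mem⟩

section

omit [HasCoproducts.{v} C]

lemma comp_distTriang_mor₃_eq_zero {T : Triangle C} (hT : T ∈ distTriang C) {A : C}
    (hinj : ∀ u : A ⟶ T.obj₁, u ≫ T.mor₁ = 0 → u = 0)
    (g : A⟦(1 : ℤ)⟧ ⟶ T.obj₃) : g ≫ T.mor₃ = 0 := by
  obtain ⟨u, hu⟩ := (shiftFunctor C (1 : ℤ)).map_surjective (g ≫ T.mor₃)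
  have hu₁ : u ≫ T.mor₁ = 0 := (shiftFunctor C (1 : ℤ)).map_injective <| by
    rw [Functor.map_comp, hu, Category.assoc, comp_distTriang_mor_zero₃₁ T hT, comp_zero,
      Functor.map_zero]
  rw [← hu, hinj u hu₁, Functor.map_zero]

lemma hom_distTriang_obj₃_eq_zero {T : Triangle C} (hT : T ∈ distTriang C) {A B : C}
    (e : B ≅ A⟦(1 : ℤ)⟧) (hinj : ∀ u : A ⟶ T.obj₁, u ≫ T.mor₁ = 0 → u = 0)
    (hsurj : ∀ v : B ⟶ T.obj₂, ∃ u : B ⟶ T.obj₁, u ≫ T.mor₁ = v) (g : B ⟶ T.obj₃) :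
    g = 0 := by
  have hg : g ≫ T.mor₃ = 0 := by
    simpa using e.hom ≫= comp_distTriang_mor₃_eq_zero hT hinj (e.inv ≫ g)
  obtain ⟨v, rfl⟩ := Triangle.coyoneda_exact₃ T hT g hg
  obtain ⟨u, rfl⟩ := hsurj v
  rw [Category.assoc, comp_distTriang_mor_zero₁₂ T hT, comp_zero]

lemma mem_shiftLeftOrthogonal_of_bijective {G : C} (T : Triangle C) (hT : T ∈ distTriang C)
    (hG : ∀ n : ℤ, Function.Bijective (fun g : G⟦n⟧ ⟶ T.obj₁ => g ≫ T.mor₁)) :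
    G ∈ shiftLeftOrthogonal T.obj₃ := fun n =>
  hom_distTriang_obj₃_eq_zero hT ((shiftFunctorAdd' C (n - 1) 1 n (by omega)).app G)
    (fun u hu => (hG (n - 1)).injective (by simpa using hu)) (hG n).surjective

end

theorem compact_generators_detect_isomorphisms_general (𝒢 : Set C)
    (hgen : ∀ S : Set C, IsLocalising S → 𝒢 ⊆ S → S = Set.univ)
    {X Y : C} (f : X ⟶ Y) :
    IsIso f ↔ ∀ G ∈ 𝒢, ∀ n : ℤ,
      Function.Bijective (fun g : G⟦n⟧ ⟶ X => g ≫ f) := by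
  refine ⟨fun _ G _ n => ?_, fun H => ?_⟩
  · exact Function.bijective_iff_has_inverse.2
      ⟨(· ≫ inv f), fun g => by simp, fun g => by simp⟩
  · obtain ⟨Z, _, _, hT⟩ := distinguished_cocone_triangle f
    have hZ : Z ∈ shiftLeftOrthogonal Z :=
      hgen _ (isLocalising_shiftLeftOrthogonal Z)
        (fun G hG => mem_shiftLeftOrthogonal_of_bijective _ hT (H G hG)) ▸ Set.mem_univ Z
    exact (Triangle.isZero₃_iff_isIso₁ _ hT).1 (shiftLeftOrthogonal.isZero_of_mem_self hZ)

/-- If a set of compact objects generates (the only localising subcategory containing it is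
the whole category), then its objects detect isomorphisms. -/
theorem compact_generators_detect_isomorphisms (𝒢 : Set C)
    (hcompact : ∀ G ∈ 𝒢, IsCompactObj G)
    (hgen : ∀ S : Set C, IsLocalising S → 𝒢 ⊆ S → S = Set.univ)
    {X Y : C} (f : X ⟶ Y) :
    IsIso f ↔ ∀ G ∈ 𝒢, ∀ n : ℤ,
      Function.Bijective (fun g : G⟦n⟧ ⟶ X => g ≫ f) :=
  compact_generators_detect_isomorphisms_general 𝒢 hgen f
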